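/- arXiv:2105.15149 — 5 statements merged into one kernel-verified Lean document; each statement's English description precedes it below -/
import Mathlib

section
/- Let (p_n) ∈ SVA₊ (i.e., liminf_n |P_{λ_n}/P_n − 1| > 0 for each λ > 0 with λ ≠ 1). Suppose the weighted geometric means w_n of a positive sequence (u_n) converge to a > 0. Then (u_n) converges to a if and only if liminf_{λ→1⁺} limsup_{n→∞} { |∏_{k=n+1}^{λ_n} (u_k/u_n)^{p_k}|* }^{1/(P_{λ_n} − P_n)} = 1. -/
open Filter

noncomputable def mulAbs (x : ℝ) : ℝ := if 1 ≤ x then x else x⁻¹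

noncomputable def Psum (p : ℕ → ℝ) (n : ℕ) : ℝ := ∑ k ∈ Finset.range (n + 1), p k

noncomputable def wgm (p u : ℕ → ℝ) (n : ℕ) : ℝ :=
  (∏ k ∈ Finset.range (n + 1), u k ^ p k) ^ (1 / Psum p n)

def SVA (p : ℕ → ℝ) : Prop :=
  ∀ l : ℝ, 0 < l → l ≠ 1 →
    0 < liminf (fun n : ℕ => |Psum p ⌊l * (n : ℝ)⌋₊ / Psum p n - 1|) atTop

/-!
Pass to logarithms: with `s = log u`, the weighted geometric means become the weighted arithmetic
means `t n = (∑_{k ≤ n} p k s k) / P n`, and the expression in the condition becomes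
`exp` of the block deviation `|∑_{n < k ≤ m} p k (s k - s n)| / (P m - P n)` with `m = ⌊λ n⌋`.
If `s → c`, block deviations tend to `0`. Conversely, the identity
`(s n - c) (P m - P n) = P m (t m - c) - P n (t n - c) - ∑_{n < k ≤ m} p k (s k - s n)`
expresses `s n - c` through the means, and the SVA₊ condition keeps `P m - P n ≥ η P n`, so that
`|s n - c|` is eventually bounded by the block deviation plus a null sequence.
-/

open Finset Topology Real

theorem sum_Ioc_eq_sum_range_sub {M : Type*} [AddCommGroup M] (f : ℕ → M) {n m : ℕ}
    (h : n ≤ m) :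
    ∑ k ∈ Ioc n m, f k = ∑ k ∈ range (m + 1), f k - ∑ k ∈ range (n + 1), f k := by
  rw [← Icc_add_one_left_eq_Ioc, ← Ico_add_one_right_eq_Icc, sum_Ico_eq_sub _ (by omega)]

theorem le_floor_mul {l : ℝ} (hl : 1 ≤ l) (n : ℕ) : n ≤ ⌊l * n⌋₊ :=
  Nat.le_floor (le_mul_of_one_le_left n.cast_nonneg hl)

-- A nonzero `liminf`/`limsup` in `ℝ` rules out the junk value `0` of an unbounded one.
theorem frequently_pos_and_lt_of_liminf_eq {ι : Type*} {F : Filter ι} {f : ι → ℝ} {c b : ℝ}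
    (hf : liminf f F = c) (hc : 0 < c) (hb : c < b) : ∃ᶠ x in F, 0 < f x ∧ f x < b := by
  have hcob : F.IsCoboundedUnder (· ≥ ·) f := by
    by_contra H
    rw [Real.liminf_of_not_isCoboundedUnder H] at hf
    linarith
  have hbdd : F.IsBoundedUnder (· ≥ ·) f := by
    by_contra H
    rw [Real.liminf_of_not_isBoundedUnder H] at hf
    linarith
  exact ((frequently_lt_of_liminf_lt hcob (hf ▸ hb)).and_eventually
    (eventually_lt_of_lt_liminf (hf ▸ hc) hbdd)).mono fun _ h => h.symm

theorem eventually_lt_of_limsup_lt_of_pos {ι : Type*} {F : Filter ι} {g : ι → ℝ} {b : ℝ}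
    (hpos : 0 < limsup g F) (h : limsup g F < b) : ∀ᶠ x in F, g x < b := by
  refine eventually_lt_of_limsup_lt h ?_
  by_contra H
  rw [Real.limsup_of_not_isBoundedUnder H] at hpos
  exact hpos.false

theorem tendsto_log_comp_iff {ι : Type*} {F : Filter ι} {u : ι → ℝ} {a : ℝ}
    (hu : ∀ i, 0 < u i) (ha : 0 < a) :
    Tendsto (fun i => log (u i)) F (𝓝 (log a)) ↔ Tendsto u F (𝓝 a) :=
  ⟨fun h => by simpa only [exp_log (hu _), exp_log ha] using h.rexp, fun h => h.log ha.ne'⟩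

theorem mulAbs_exp (x : ℝ) : mulAbs (exp x) = exp |x| := by
  unfold mulAbs
  rcases le_or_gt 0 x with hx | hx
  · rw [if_pos (one_le_exp hx), abs_of_nonneg hx]
  · rw [if_neg (exp_lt_one_iff.2 hx).not_ge, abs_of_neg hx, exp_neg]

section Psum

variable {p : ℕ → ℝ}

theorem Psum_sub_Psum {n m : ℕ} (h : n ≤ m) :
    Psum p m - Psum p n = ∑ k ∈ Ioc n m, p k :=
  (sum_Ioc_eq_sum_range_sub p h).symm

theorem Psum_mono (hp : ∀ n, 0 ≤ p n) : Monotone (Psum p) := fun _ _ h =>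
  sum_le_sum_of_subset_of_nonneg (range_subset_range.2 (by omega)) fun k _ _ => hp k

theorem Psum_pos (hp : ∀ n, 0 ≤ p n) (hp0 : 0 < p 0) (n : ℕ) : 0 < Psum p n :=
  hp0.trans_le (single_le_sum (fun k _ => hp k) (mem_range.2 n.succ_pos))

theorem SVA.exists_eventually_mul_le_Psum_sub (hSVA : SVA p) (hp : ∀ n, 0 ≤ p n)
    (hp0 : 0 < p 0) {l : ℝ} (hl : 1 < l) :
    ∃ η > 0, ∀ᶠ n : ℕ in atTop, η * Psum p n ≤ Psum p ⌊l * n⌋₊ - Psum p n := by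
  have hL := hSVA l (by linarith) hl.ne'
  refine ⟨_, half_pos hL, ?_⟩
  filter_upwards [eventually_lt_of_lt_liminf (half_lt_self hL)
    (isBoundedUnder_of_eventually_ge (.of_forall fun _ => abs_nonneg _))] with n hn
  have hPn := Psum_pos hp hp0 n
  have hratio : 1 ≤ Psum p ⌊l * n⌋₊ / Psum p n :=
    (one_le_div hPn).2 (Psum_mono hp (le_floor_mul hl.le n))
  rw [abs_of_nonneg (by linarith), lt_sub_iff_add_lt, lt_div_iff₀ hPn] at hn
  linarith

end Psum

noncomputable def wmean (p s : ℕ → ℝ) (n : ℕ) : ℝ :=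
  (∑ k ∈ range (n + 1), p k * s k) / Psum p n

noncomputable def blockDeviation (p s : ℕ → ℝ) (n m : ℕ) : ℝ :=
  |∑ k ∈ Ioc n m, p k * (s k - s n)| / (Psum p m - Psum p n)

section Additive

variable {p s : ℕ → ℝ} {c : ℝ}

theorem blockDeviation_nonneg (hp : ∀ n, 0 ≤ p n) {n m : ℕ} (h : n ≤ m) :
    0 ≤ blockDeviation p s n m :=
  div_nonneg (abs_nonneg _) (sub_nonneg.2 (Psum_mono hp h))

theorem blockDeviation_le (hp : ∀ n, 0 ≤ p n) {n m : ℕ} (h : n ≤ m) {ε : ℝ} (hε : 0 ≤ ε)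
    (hs : ∀ k ∈ Ioc n m, |s k - s n| ≤ ε) : blockDeviation p s n m ≤ ε := by
  have hsum : |∑ k ∈ Ioc n m, p k * (s k - s n)| ≤ ε * (Psum p m - Psum p n) :=
    calc |∑ k ∈ Ioc n m, p k * (s k - s n)|
        ≤ ∑ k ∈ Ioc n m, p k * ε := by
          refine (abs_sum_le_sum_abs _ _).trans (sum_le_sum fun k hk => ?_)
          rw [abs_mul, abs_of_nonneg (hp k)]
          exact mul_le_mul_of_nonneg_left (hs k hk) (hp k)
      _ = ε * (Psum p m - Psum p n) := by rw [← sum_mul, Psum_sub_Psum h, mul_comm]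
  exact div_le_of_le_mul₀ (sub_nonneg.2 (Psum_mono hp h)) hε hsum

theorem tendsto_blockDeviation_zero (hp : ∀ n, 0 ≤ p n) (hs : Tendsto s atTop (𝓝 c))
    {m : ℕ → ℕ} (hm : ∀ n, n ≤ m n) :
    Tendsto (fun n => blockDeviation p s n (m n)) atTop (𝓝 0) := by
  rw [Metric.tendsto_atTop]
  intro ε hε
  obtain ⟨N, hN⟩ := Metric.cauchySeq_iff.1 hs.cauchySeq (ε / 2) (half_pos hε)
  refine ⟨N, fun n hn => ?_⟩
  have hdev : blockDeviation p s n (m n) ≤ ε / 2 :=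
    blockDeviation_le hp (hm n) (half_pos hε).le fun k hk =>
      (hN k (hn.trans (mem_Ioc.1 hk).1.le) n hn).le
  rw [Real.dist_eq, sub_zero, abs_of_nonneg (blockDeviation_nonneg hp (hm n))]
  linarith

theorem Psum_mul_wmean (hp : ∀ n, 0 ≤ p n) (hp0 : 0 < p 0) (n : ℕ) :
    Psum p n * wmean p s n = ∑ k ∈ range (n + 1), p k * s k :=
  mul_div_cancel₀ _ (Psum_pos hp hp0 n).ne'

theorem sum_Ioc_mul_sub_eq (hp : ∀ n, 0 ≤ p n) (hp0 : 0 < p 0) {n m : ℕ} (h : n ≤ m) :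
    ∑ k ∈ Ioc n m, p k * (s k - s n) =
      Psum p m * wmean p s m - Psum p n * wmean p s n - (Psum p m - Psum p n) * s n := by
  simp only [mul_sub, sum_sub_distrib, ← sum_mul, Psum_mul_wmean hp hp0,
    sum_Ioc_eq_sum_range_sub _ h, Psum_sub_Psum h]
  ring

theorem abs_sub_le_of_mul_le_Psum_sub (hp : ∀ n, 0 ≤ p n) (hp0 : 0 < p 0) {η : ℝ} (hη : 0 < η)
    {n m : ℕ} (h : n ≤ m) (hgap : η * Psum p n ≤ Psum p m - Psum p n) :
    |s n - c| ≤ (1 + η⁻¹) * |wmean p s m - c| + η⁻¹ * |wmean p s n - c|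
      + blockDeviation p s n m := by
  set D := Psum p m - Psum p n
  have hPn := Psum_pos hp hp0 n
  have hD : 0 < D := (mul_pos hη hPn).trans_le hgap
  have hPn_le : Psum p n ≤ η⁻¹ * D := by rwa [le_inv_mul_iff₀ hη]
  have hPm_le : Psum p m ≤ (1 + η⁻¹) * D := by linarith
  have hid : (s n - c) * D = Psum p m * (wmean p s m - c) - Psum p n * (wmean p s n - c)
      - ∑ k ∈ Ioc n m, p k * (s k - s n) := by
    rw [sum_Ioc_mul_sub_eq hp hp0 h]; ring
  rw [← mul_le_mul_iff_of_pos_right hD, blockDeviation, add_mul, div_mul_cancel₀ _ hD.ne']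
  calc |s n - c| * D
      ≤ Psum p m * |wmean p s m - c| + Psum p n * |wmean p s n - c|
        + |∑ k ∈ Ioc n m, p k * (s k - s n)| := by
        rw [← abs_of_pos hD, ← abs_mul, hid]
        refine (abs_sub _ _).trans ?_
        gcongr
        refine (abs_sub _ _).trans_eq ?_
        rw [abs_mul, abs_mul, abs_of_pos (hPn.trans_le (Psum_mono hp h)), abs_of_pos hPn]
    _ ≤ (1 + η⁻¹) * D * |wmean p s m - c| + η⁻¹ * D * |wmean p s n - c|
        + |∑ k ∈ Ioc n m, p k * (s k - s n)| := by gcongr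
    _ = _ := by ring

theorem tendsto_of_tendsto_wmean (hp : ∀ n, 0 ≤ p n) (hp0 : 0 < p 0) (hSVA : SVA p)
    (ht : Tendsto (wmean p s) atTop (𝓝 c))
    (hblock : ∀ ε > 0, ∃ l > (1 : ℝ), ∀ᶠ n : ℕ in atTop, blockDeviation p s n ⌊l * n⌋₊ < ε) :
    Tendsto s atTop (𝓝 c) := by
  rw [Metric.tendsto_nhds]
  intro ε hε
  obtain ⟨l, hl, hdev⟩ := hblock (ε / 2) (half_pos hε)
  obtain ⟨η, hη, hgap⟩ := hSVA.exists_eventually_mul_le_Psum_sub hp hp0 hl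
  have hfloor : Tendsto (fun n : ℕ => ⌊l * n⌋₊) atTop atTop :=
    tendsto_atTop_mono (le_floor_mul hl.le) tendsto_id
  have hmeans : Tendsto (fun n : ℕ =>
      (1 + η⁻¹) * |wmean p s ⌊l * n⌋₊ - c| + η⁻¹ * |wmean p s n - c|) atTop (𝓝 0) := by
    simpa using (((ht.comp hfloor).sub_const c).abs.const_mul (1 + η⁻¹)).add
      ((ht.sub_const c).abs.const_mul η⁻¹)
  filter_upwards [hgap, hdev, hmeans.eventually (gt_mem_nhds (half_pos hε))]
    with n hgap_n hdev_n hmeans_n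
  rw [Real.dist_eq]
  linarith [abs_sub_le_of_mul_le_Psum_sub (s := s) (c := c) hp hp0 hη (le_floor_mul hl.le n) hgap_n]

theorem tendsto_iff_liminf_limsup_exp_blockDeviation (hp : ∀ n, 0 ≤ p n) (hp0 : 0 < p 0)
    (hSVA : SVA p) (ht : Tendsto (wmean p s) atTop (𝓝 c)) :
    Tendsto s atTop (𝓝 c) ↔
      liminf (fun l : ℝ => limsup (fun n : ℕ => exp (blockDeviation p s n ⌊l * n⌋₊)) atTop)
        (𝓝[>] 1) = 1 := by
  constructor
  · intro hs
    refine Tendsto.liminf_eq (tendsto_const_nhds.congr' ?_)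
    filter_upwards [self_mem_nhdsWithin] with l hl
    refine (Tendsto.limsup_eq ?_).symm
    simpa using (tendsto_blockDeviation_zero hp hs (le_floor_mul hl.le)).rexp
  · intro h
    refine tendsto_of_tendsto_wmean hp hp0 hSVA ht fun ε hε => ?_
    obtain ⟨l, ⟨hpos, hlt⟩, hl⟩ := ((frequently_pos_and_lt_of_liminf_eq h one_pos
      (one_lt_exp_iff.2 hε)).and_eventually self_mem_nhdsWithin).exists
    exact ⟨l, hl, (eventually_lt_of_limsup_lt_of_pos hpos hlt).mono fun n hn => exp_lt_exp.1 hn⟩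

end Additive

section Multiplicative

variable {p u : ℕ → ℝ}

theorem mulAbs_prod_rpow_eq_exp (hu : ∀ n, 0 < u n) (n m : ℕ) :
    mulAbs (∏ k ∈ Ioc n m, (u k / u n) ^ p k) ^ (1 / (Psum p m - Psum p n)) =
      exp (blockDeviation p (fun k => log (u k)) n m) := by
  have hprod : ∏ k ∈ Ioc n m, (u k / u n) ^ p k =
      exp (∑ k ∈ Ioc n m, p k * (log (u k) - log (u n))) := by
    rw [exp_sum]
    refine prod_congr rfl fun k _ => ?_
    rw [rpow_def_of_pos (div_pos (hu k) (hu n)), log_div (hu k).ne' (hu n).ne', mul_comm]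
  rw [hprod, mulAbs_exp, ← exp_mul, mul_one_div, blockDeviation]

theorem log_wgm (hu : ∀ n, 0 < u n) (n : ℕ) :
    log (wgm p u n) = wmean p (fun k => log (u k)) n := by
  have hpow : ∀ k, 0 < u k ^ p k := fun k => rpow_pos_of_pos (hu k) _
  rw [wgm, wmean, log_rpow (prod_pos fun k _ => hpow k),
    log_prod fun k _ => (hpow k).ne', one_div_mul_eq_div]
  simp only [log_rpow (hu _)]

end Multiplicative

theorem tauberian_right_general (p u : ℕ → ℝ) (a : ℝ)
    (hp : ∀ n, 0 ≤ p n) (hp0 : 0 < p 0)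
    (hSVA : SVA p)
    (hu : ∀ n, 0 < u n) (ha : 0 < a)
    (hw : Tendsto (wgm p u) atTop (nhds a)) :
    Tendsto u atTop (nhds a) ↔
      liminf (fun l : ℝ =>
          limsup (fun n : ℕ =>
              (mulAbs (∏ k ∈ Finset.Ioc n ⌊l * (n : ℝ)⌋₊, (u k / u n) ^ p k)) ^
                (1 / (Psum p ⌊l * (n : ℝ)⌋₊ - Psum p n))) atTop)
        (nhdsWithin 1 (Set.Ioi 1)) = 1 := by
  have ht : Tendsto (wmean p fun k => log (u k)) atTop (𝓝 (log a)) := by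
    simpa only [log_wgm hu] using hw.log ha.ne'
  simp only [mulAbs_prod_rpow_eq_exp hu]
  rw [← tendsto_log_comp_iff hu ha]
  exact tendsto_iff_liminf_limsup_exp_blockDeviation hp hp0 hSVA ht

theorem tauberian_right (p u : ℕ → ℝ) (a : ℝ)
    (hp : ∀ n, 0 ≤ p n) (hp0 : 0 < p 0)
    (hP : Tendsto (Psum p) atTop atTop) (hSVA : SVA p)
    (hu : ∀ n, 0 < u n) (ha : 0 < a)
    (hw : Tendsto (wgm p u) atTop (nhds a)) :
    Tendsto u atTop (nhds a) ↔
      liminf (fun l : ℝ =>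
          limsup (fun n : ℕ =>
              (mulAbs (∏ k ∈ Finset.Ioc n ⌊l * (n : ℝ)⌋₊, (u k / u n) ^ p k)) ^
                (1 / (Psum p ⌊l * (n : ℝ)⌋₊ - Psum p n))) atTop)
        (nhdsWithin 1 (Set.Ioi 1)) = 1 :=
  tauberian_right_general p u a hp hp0 hSVA hu ha hw
end

section
/- If the sequence ((Δ*u_n)^n) is *bounded, i.e., there exists H > 1 with |(u_n/u_{n-1})^n|* < H for all n ≥ 1, then (u_n) is *-slowly oscillating: liminf_{λ→1⁺} limsup_{n→∞} max_{n<m≤λ_n} |u_m/u_n|* = 1. -/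
open Filter

def StarSlowlyOscillating (u : ℕ → ℝ) : Prop :=
  liminf (fun l : ℝ =>
      limsup (fun n : ℕ =>
          sSup ((fun m => mulAbs (u m / u n)) '' Set.Ioc n ⌊l * (n : ℝ)⌋₊)) atTop)
    (nhdsWithin 1 (Set.Ioi 1)) = 1

lemma mulAbs_eq_exp_abs_log {x : ℝ} (hx : 0 < x) : mulAbs x = Real.exp |Real.log x| := by
  unfold mulAbs
  rcases le_or_gt 1 x with h1 | h1
  · rw [if_pos h1, abs_of_nonneg (Real.log_nonneg h1), Real.exp_log hx]
  · rw [if_neg (not_le.2 h1), abs_of_neg (Real.log_neg hx h1), ← Real.log_inv,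
      Real.exp_log (by positivity)]

lemma one_le_mulAbs {x : ℝ} (hx : 0 < x) : 1 ≤ mulAbs x := by
  rw [mulAbs_eq_exp_abs_log hx]
  exact Real.one_le_exp (abs_nonneg _)

lemma abs_sub_le_chain (L : ℕ → ℝ) (C : ℝ) (hC : 0 ≤ C)
    (hstep : ∀ k : ℕ, 1 ≤ k → |L k - L (k - 1)| ≤ C / k) :
    ∀ n m : ℕ, n ≤ m → |L m - L n| ≤ ((m : ℝ) - n) * (C / (n + 1)) := by
  intro n m hnm
  induction m, hnm using Nat.le_induction with
  | base => simp
  | succ m hm ih =>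
    have h1 : |L (m + 1) - L m| ≤ C / (m + 1) := by
      have := hstep (m + 1) (by omega)
      simpa using this
    have h2 : C / ((m : ℝ) + 1) ≤ C / ((n : ℝ) + 1) := by
      apply div_le_div_of_nonneg_left hC (by positivity)
      have : (n : ℝ) ≤ m := Nat.cast_le.2 hm
      linarith
    have h3 : |L (m + 1) - L n| ≤ |L (m + 1) - L m| + |L m - L n| := abs_sub_le _ _ _
    push_cast
    have hCm : C / ((n:ℝ) + 1) ≥ 0 := by positivity
    nlinarith [h3, h1, ih, h2]

theorem starBounded_diff_imp_slowOsc (u : ℕ → ℝ) (hu : ∀ n, 0 < u n)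
    (h : ∃ H : ℝ, 1 < H ∧ ∀ n : ℕ, 1 ≤ n → mulAbs ((u n / u (n - 1)) ^ n) < H) :
    StarSlowlyOscillating u := by
  obtain ⟨H, hH, hbound⟩ := h
  have hH0 : (0:ℝ) < H := by linarith
  have hlogH : 0 < Real.log H := Real.log_pos hH
  set L : ℕ → ℝ := fun n => Real.log (u n) with hLdef
  -- step bound on logs
  have hstep : ∀ k : ℕ, 1 ≤ k → |L k - L (k - 1)| ≤ Real.log H / k := by
    intro k hk
    have hk0 : (0:ℝ) < k := by exact_mod_cast hk
    have hpos : 0 < u k / u (k - 1) := div_pos (hu k) (hu (k - 1))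
    have hdiff : Real.log (u k / u (k - 1)) = L k - L (k - 1) :=
      Real.log_div (hu k).ne' (hu (k - 1)).ne'
    have hq : mulAbs ((u k / u (k - 1)) ^ k) = Real.exp ((k : ℝ) * |L k - L (k - 1)|) := by
      rw [mulAbs_eq_exp_abs_log (pow_pos hpos k), Real.log_pow, hdiff, abs_mul,
        abs_of_nonneg (by positivity : (0:ℝ) ≤ (k:ℝ))]
    have hlt : (k : ℝ) * |L k - L (k - 1)| < Real.log H := by
      have := hbound k hk
      rw [hq] at this
      rwa [← Real.lt_log_iff_exp_lt hH0] at this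
    rw [le_div_iff₀ hk0]
    nlinarith
  have key : ∀ n m : ℕ, n ≤ m → |L m - L n| ≤ ((m : ℝ) - n) * (Real.log H / (n + 1)) :=
    abs_sub_le_chain L (Real.log H) hlogH.le hstep
  set B : ℝ → ℝ := fun l => Real.exp ((l - 1) * Real.log H) with hBdef
  -- upper bound for elements of the sup-set
  have hub : ∀ l : ℝ, 1 < l → ∀ n : ℕ, ∀ x ∈ ((fun m => mulAbs (u m / u n)) ''
      Set.Ioc n ⌊l * (n : ℝ)⌋₊), x ≤ B l := by
    rintro l hl n x ⟨m, ⟨hm1, hm2⟩, rfl⟩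
    have hln : (0:ℝ) ≤ l * n := by positivity
    have hmn : (m : ℝ) ≤ l * n :=
      le_trans (Nat.cast_le.2 hm2) (Nat.floor_le hln)
    have hmn' : (m : ℝ) - n ≤ (l - 1) * (n + 1) := by nlinarith [Nat.cast_nonneg (α := ℝ) n]
    have h1 : |L m - L n| ≤ ((m : ℝ) - n) * (Real.log H / (n + 1)) := key n m hm1.le
    have h2 : ((m : ℝ) - n) * (Real.log H / (n + 1)) ≤ (l - 1) * Real.log H := by
      have hn1 : (0:ℝ) < (n:ℝ) + 1 := by positivity
      calc ((m : ℝ) - n) * (Real.log H / (n + 1))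
          = (((m : ℝ) - n) / (n + 1)) * Real.log H := by ring
        _ ≤ (l - 1) * Real.log H := by
            apply mul_le_mul_of_nonneg_right _ hlogH.le
            rw [div_le_iff₀ hn1]
            linarith
    show mulAbs (u m / u n) ≤ B l
    rw [mulAbs_eq_exp_abs_log (div_pos (hu m) (hu n)), hBdef]
    apply Real.exp_le_exp.2
    rw [Real.log_div (hu m).ne' (hu n).ne']
    calc |L m - L n| ≤ _ := h1
      _ ≤ _ := h2
  have hfB : ∀ l : ℝ, 1 < l → ∀ n : ℕ,
      sSup ((fun m => mulAbs (u m / u n)) '' Set.Ioc n ⌊l * (n : ℝ)⌋₊) ≤ B l := by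
    intro l hl n
    exact Real.sSup_le (hub l hl n) (Real.exp_pos _).le
  have hf0 : ∀ l : ℝ, ∀ n : ℕ,
      0 ≤ sSup ((fun m => mulAbs (u m / u n)) '' Set.Ioc n ⌊l * (n : ℝ)⌋₊) := by
    intro l n
    apply Real.sSup_nonneg
    rintro x ⟨m, _, rfl⟩
    exact le_trans zero_le_one (one_le_mulAbs (div_pos (hu m) (hu n)))
  have hf1 : ∀ l : ℝ, 1 < l → ∀ᶠ n in atTop, (1:ℝ) ≤
      sSup ((fun m => mulAbs (u m / u n)) '' Set.Ioc n ⌊l * (n : ℝ)⌋₊) := by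
    intro l hl
    have hl0 : (0:ℝ) < l - 1 := by linarith
    filter_upwards [eventually_ge_atTop (⌈(l - 1)⁻¹⌉₊ + 1)] with n hn
    have hn' : ((l - 1)⁻¹ : ℝ) ≤ n := by
      refine le_trans (Nat.le_ceil _) ?_
      exact_mod_cast (by omega : ⌈(l - 1)⁻¹⌉₊ ≤ n)
    have hn1 : (1:ℝ) ≤ (l - 1) * n := by
      have := mul_le_mul_of_nonneg_left hn' hl0.le
      rwa [mul_inv_cancel₀ hl0.ne'] at this
    have hmem : n + 1 ∈ Set.Ioc n ⌊l * (n : ℝ)⌋₊ := by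
      refine ⟨by omega, ?_⟩
      rw [Nat.le_floor_iff (by positivity)]
      push_cast
      nlinarith
    have hbdd : BddAbove ((fun m => mulAbs (u m / u n)) '' Set.Ioc n ⌊l * (n : ℝ)⌋₊) :=
      ⟨B l, fun x hx => hub l hl n x hx⟩
    calc (1:ℝ) ≤ mulAbs (u (n + 1) / u n) := one_le_mulAbs (div_pos (hu _) (hu _))
      _ ≤ _ := le_csSup hbdd ⟨n + 1, hmem, rfl⟩
  -- per-l limsup facts
  set G : ℝ → ℝ := fun l =>
    limsup (fun n : ℕ =>
      sSup ((fun m => mulAbs (u m / u n)) '' Set.Ioc n ⌊l * (n : ℝ)⌋₊)) atTop with hGdef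
  have hGB : ∀ l : ℝ, 1 < l → G l ≤ B l := by
    intro l hl
    apply limsup_le_of_le
    · exact (IsBoundedUnder.isCoboundedUnder_le ⟨0, eventually_map.2 (Eventually.of_forall (hf0 l))⟩)
    · exact Eventually.of_forall (hfB l hl)
  have hG1 : ∀ l : ℝ, 1 < l → 1 ≤ G l := by
    intro l hl
    exact le_limsup_of_frequently_le ((hf1 l hl).frequently)
      ⟨B l, eventually_map.2 (Eventually.of_forall (hfB l hl))⟩
  -- the outer liminf
  have hev : ∀ᶠ l in nhdsWithin (1:ℝ) (Set.Ioi 1), 1 < l := eventually_mem_nhdsWithin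
  have hev2 : ∀ᶠ l in nhdsWithin (1:ℝ) (Set.Ioi 1), l < 2 :=
    (gt_mem_nhds (by norm_num : (1:ℝ) < 2)).filter_mono nhdsWithin_le_nhds
  have hGbddAbove : IsBoundedUnder (· ≤ ·) (nhdsWithin (1:ℝ) (Set.Ioi 1)) G := by
    refine ⟨Real.exp (Real.log H), eventually_map.2 ?_⟩
    filter_upwards [hev, hev2] with l hl hl2
    refine le_trans (hGB l hl) ?_
    rw [hBdef]
    apply Real.exp_le_exp.2
    nlinarith
  have hGcob : IsCoboundedUnder (· ≥ ·) (nhdsWithin (1:ℝ) (Set.Ioi 1)) G :=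
    hGbddAbove.isCoboundedUnder_ge
  have hBtend : Tendsto B (nhdsWithin (1:ℝ) (Set.Ioi 1)) (nhds 1) := by
    have hc : Continuous B := Real.continuous_exp.comp (by continuity)
    have := hc.tendsto 1
    have h1 : B 1 = 1 := by simp [hBdef]
    rw [h1] at this
    exact this.mono_left nhdsWithin_le_nhds
  have hlower : 1 ≤ liminf G (nhdsWithin (1:ℝ) (Set.Ioi 1)) :=
    le_liminf_of_le hGcob (hev.mono fun l hl => hG1 l hl)
  have hupper : liminf G (nhdsWithin (1:ℝ) (Set.Ioi 1)) ≤ 1 := by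
    have hstep2 : liminf G (nhdsWithin (1:ℝ) (Set.Ioi 1)) ≤
        liminf B (nhdsWithin (1:ℝ) (Set.Ioi 1)) := by
      refine liminf_le_liminf (hev.mono fun l hl => hGB l hl) ?_ ?_
      · exact ⟨1, eventually_map.2 (hev.mono fun l hl => hG1 l hl)⟩
      · refine IsBoundedUnder.isCoboundedUnder_ge ⟨Real.exp (Real.log H), eventually_map.2 ?_⟩
        filter_upwards [hev, hev2] with l hl hl2
        show B l ≤ Real.exp (Real.log H)
        rw [hBdef]
        apply Real.exp_le_exp.2
        nlinarith
    rwa [hBtend.liminf_eq] at hstep2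
  exact le_antisymm hupper hlower
end

section
/- Let α_n = (μ_n, ν_n) be a sequence of intuitionistic fuzzy numbers and ξ = (μ_ξ, ν_ξ) an IFN with ξ <_L (1,0) (i.e., μ_ξ < 1 and ν_ξ > 0). Then (α_n) ⊕-converges to ξ (for every ε ∈ (0,1], eventually α_n <_L ξ ⊕ (ε, 1−ε) and ξ <_L α_n ⊕ (ε, 1−ε)) if and only if μ_n → μ_ξ and ν_n → ν_ξ. -/
open Filter

theorem oplusConvergence_iff (μ ν : ℕ → ℝ) (μξ νξ : ℝ)
    (hμ : ∀ n, 0 ≤ μ n) (hν : ∀ n, 0 ≤ ν n) (hsum : ∀ n, μ n + ν n ≤ 1)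
    (hμξ : 0 ≤ μξ) (hνξ : 0 ≤ νξ) (hsumξ : μξ + νξ ≤ 1)
    (hlt : μξ < 1 ∧ 0 < νξ) :
    (∀ ε : ℝ, 0 < ε → ε ≤ 1 → ∃ n₀ : ℕ, ∀ n > n₀,
        (μ n < 1 - (1 - μξ) * (1 - ε) ∧ νξ * (1 - ε) < ν n) ∧
        (μξ < 1 - (1 - μ n) * (1 - ε) ∧ ν n * (1 - ε) < νξ)) ↔
      (Tendsto μ atTop (nhds μξ) ∧ Tendsto ν atTop (nhds νξ)) := by
  obtain ⟨hμξ1, hνξ0⟩ := hlt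
  constructor
  · intro h
    have key : ∀ δ : ℝ, 0 < δ → ∃ N : ℕ, ∀ n ≥ N, |μ n - μξ| < δ ∧ |ν n - νξ| < δ := by
      intro δ hδ
      obtain ⟨n₀, hn₀⟩ := h (min δ 1) (lt_min hδ one_pos) (min_le_right _ _)
      refine ⟨n₀ + 1, fun n hn => ?_⟩
      obtain ⟨⟨h1, h2⟩, h3, h4⟩ := hn₀ n (by omega)
      set ε := min δ 1 with hε
      have hε0 : 0 < ε := lt_min hδ one_pos
      have hε1 : ε ≤ 1 := min_le_right _ _
      have hεδ : ε ≤ δ := min_le_left _ _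
      have hμn1 : μ n ≤ 1 := by nlinarith [hν n, hsum n]
      have hνn1 : ν n ≤ 1 := by nlinarith [hμ n, hsum n]
      have hνξ1 : νξ ≤ 1 := by nlinarith
      constructor
      · rw [abs_sub_lt_iff]
        constructor
        · nlinarith [mul_nonneg hε0.le hμξ]
        · nlinarith [mul_nonneg hε0.le (hμ n)]
      · rw [abs_sub_lt_iff]
        constructor
        · nlinarith [mul_nonneg hε0.le (by linarith : (0:ℝ) ≤ 1 - νξ)]
        · nlinarith [mul_nonneg hε0.le (by linarith : (0:ℝ) ≤ 1 - ν n)]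
    constructor
    · rw [Metric.tendsto_atTop]
      intro δ hδ
      obtain ⟨N, hN⟩ := key δ hδ
      exact ⟨N, fun n hn => by simpa [Real.dist_eq] using (hN n hn).1⟩
    · rw [Metric.tendsto_atTop]
      intro δ hδ
      obtain ⟨N, hN⟩ := key δ hδ
      exact ⟨N, fun n hn => by simpa [Real.dist_eq] using (hN n hn).2⟩
  · rintro ⟨hμt, hνt⟩ ε hε0 hε1
    have h1μ : 0 < 1 - μξ := by linarith
    set δ : ℝ := min (ε * (1 - μξ) / 2) (ε * νξ / 2) with hδdef
    have hδ0 : 0 < δ := lt_min (by positivity) (by positivity)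
    have hδμ : δ ≤ ε * (1 - μξ) / 2 := min_le_left _ _
    have hδν : δ ≤ ε * νξ / 2 := min_le_right _ _
    rw [Metric.tendsto_atTop] at hμt hνt
    obtain ⟨N₁, hN₁⟩ := hμt δ hδ0
    obtain ⟨N₂, hN₂⟩ := hνt δ hδ0
    refine ⟨max N₁ N₂, fun n hn => ?_⟩
    have hμn := hN₁ n (le_of_lt (lt_of_le_of_lt (le_max_left _ _) hn))
    have hνn := hN₂ n (le_of_lt (lt_of_le_of_lt (le_max_right _ _) hn))
    rw [Real.dist_eq, abs_sub_lt_iff] at hμn hνn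
    obtain ⟨ha, hb⟩ := hμn
    obtain ⟨hc, hd⟩ := hνn
    have h1ε : 0 ≤ 1 - ε := by linarith
    refine ⟨⟨by nlinarith, by nlinarith⟩, by nlinarith [mul_nonneg h1ε (by linarith : (0:ℝ) ≤ μ n - μξ + δ)], by nlinarith [mul_nonneg h1ε (by linarith : (0:ℝ) ≤ νξ + δ - ν n)]⟩
end

section
/- Let α_n = (μ_n, ν_n) be a sequence of IFNs and ξ an IFN with ξ >_L (0,1) (i.e., μ_ξ > 0 and ν_ξ < 1). Then (α_n) ⊗-converges to ξ (for every ε̄ = (1−ε, ε) <_L (1,0), eventually α_n ⊗ ε̄ <_L ξ and ξ ⊗ ε̄ <_L α_n) if and only if μ_n → μ_ξ and ν_n → ν_ξ. -/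
open Filter

theorem otimesConvergence_iff (μ ν : ℕ → ℝ) (μξ νξ : ℝ)
    (hμ : ∀ n, 0 ≤ μ n) (hν : ∀ n, 0 ≤ ν n) (hsum : ∀ n, μ n + ν n ≤ 1)
    (hμξ : 0 ≤ μξ) (hνξ : 0 ≤ νξ) (hsumξ : μξ + νξ ≤ 1)
    (hgt : 0 < μξ ∧ νξ < 1) :
    (∀ ε : ℝ, 0 < ε → ε ≤ 1 → ∃ n₀ : ℕ, ∀ n > n₀,
        (μ n * (1 - ε) < μξ ∧ νξ < 1 - (1 - ν n) * (1 - ε)) ∧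
        (μξ * (1 - ε) < μ n ∧ ν n < 1 - (1 - νξ) * (1 - ε))) ↔
      (Tendsto μ atTop (nhds μξ) ∧ Tendsto ν atTop (nhds νξ)) := by
  obtain ⟨hμξ0, hνξ1⟩ := hgt
  constructor
  · intro h
    constructor
    · rw [Metric.tendsto_atTop]
      intro δ hδ
      obtain ⟨n₀, hn₀⟩ := h (min δ 1) (lt_min hδ one_pos) (min_le_right _ _)
      refine ⟨n₀ + 1, fun n hn => ?_⟩
      obtain ⟨⟨a, _⟩, ⟨b, _⟩⟩ := hn₀ n (by omega)
      rw [Real.dist_eq, abs_lt]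
      have h1 : μ n ≤ 1 := by linarith [hν n, hsum n]
      have h2 : μξ ≤ 1 := by linarith
      have hm : min δ 1 ≤ δ := min_le_left _ _
      have he : (0:ℝ) < min δ 1 := lt_min hδ one_pos
      constructor <;> nlinarith [hμ n]
    · rw [Metric.tendsto_atTop]
      intro δ hδ
      obtain ⟨n₀, hn₀⟩ := h (min δ 1) (lt_min hδ one_pos) (min_le_right _ _)
      refine ⟨n₀ + 1, fun n hn => ?_⟩
      obtain ⟨⟨_, a⟩, ⟨_, b⟩⟩ := hn₀ n (by omega)
      rw [Real.dist_eq, abs_lt]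
      have h1 : ν n ≤ 1 := by linarith [hμ n, hsum n]
      have h2 : νξ ≤ 1 := by linarith
      have hm : min δ 1 ≤ δ := min_le_left _ _
      have he : (0:ℝ) < min δ 1 := lt_min hδ one_pos
      constructor <;> nlinarith [hν n]
  · rintro ⟨h1, h2⟩ ε hε hε1
    set m := min μξ (1 - νξ) with hm
    have hm0 : 0 < m := lt_min hμξ0 (by linarith)
    have hmμ : m ≤ μξ := min_le_left _ _
    have hmν : m ≤ 1 - νξ := min_le_right _ _
    have hδ : 0 < ε / 2 * m := by positivity
    obtain ⟨N1, hN1⟩ := Metric.tendsto_atTop.mp h1 _ hδ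
    obtain ⟨N2, hN2⟩ := Metric.tendsto_atTop.mp h2 _ hδ
    refine ⟨max N1 N2, fun n hn => ?_⟩
    have d1 := hN1 n (le_of_lt (lt_of_le_of_lt (le_max_left _ _) hn))
    have d2 := hN2 n (le_of_lt (lt_of_le_of_lt (le_max_right _ _) hn))
    rw [Real.dist_eq, abs_lt] at d1 d2
    obtain ⟨d1l, d1r⟩ := d1
    obtain ⟨d2l, d2r⟩ := d2
    refine ⟨⟨?_, ?_⟩, ?_, ?_⟩ <;> nlinarith [mul_pos hε hm0, sq_nonneg ε, mul_pos hε hμξ0]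
end

section
/- If a sequence (α_n) = ((μ_n, ν_n)) of IFNs, each satisfying α_n >_L (0,1), ⊗-converges to an IFN ξ >_L (0,1), then for any weights (p_n) with p₀ > 0 and P_n → ∞, the weighted geometric means h_n = (⊗_{k=0}^n α_k^{p_k})^{1/P_n} = (∏_{k=0}^n μ_k^{p_k/P_n}, 1 − ∏_{k=0}^n (1−ν_k)^{p_k/P_n}) also ⊗-converge to ξ. -/
open Filter

/-- ⊗-convergence of a sequence of IFNs (given as pairs) to an IFN ξ = (μξ, νξ). -/
def OtimesConvergesTo (t : ℕ → ℝ × ℝ) (μξ νξ : ℝ) : Prop :=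
  ∀ ε : ℝ, 0 < ε → ε ≤ 1 → ∃ n₀ : ℕ, ∀ n > n₀,
    ((t n).1 * (1 - ε) < μξ ∧ νξ < 1 - (1 - (t n).2) * (1 - ε)) ∧
    (μξ * (1 - ε) < (t n).1 ∧ (t n).2 < 1 - (1 - νξ) * (1 - ε))

/-!
When `μ_ξ > 0` and `ν_ξ < 1`, ⊗-convergence is ordinary convergence of `μ_n` and of `1 - ν_n`.
Both components of `h_n` are weighted geometric means (of `μ_k` and of `1 - ν_k`), and taking
logarithms turns these into weighted arithmetic means, which are regular for nonnegative weights
with `P_n → ∞`: the contribution of any fixed initial segment is swamped by `P_n`.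
-/

open Topology Asymptotics Finset

lemma eventually_atTop_iff_exists_forall_gt {P : ℕ → Prop} :
    (∀ᶠ n in atTop, P n) ↔ ∃ n₀, ∀ n > n₀, P n := by
  simp [atTop_basis_Ioi.eventually_iff]

lemma tendsto_nhds_iff_eventually_ratio {α : Type*} {l : Filter α} {f : α → ℝ} {A : ℝ}
    (hA : 0 < A) :
    Tendsto f l (𝓝 A) ↔
      ∀ ε : ℝ, 0 < ε → ε ≤ 1 → ∀ᶠ n in l, A * (1 - ε) < f n ∧ f n * (1 - ε) < A := by
  refine ⟨fun h ε hε _ => ?_, fun h => tendsto_order.2 ⟨fun a ha => ?_, fun a ha => ?_⟩⟩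
  · have hlt : A * (1 - ε) < A := by nlinarith
    exact (h.eventually (eventually_gt_nhds hlt)).and
      ((h.mul_const (1 - ε)).eventually (eventually_lt_nhds hlt))
  · have hε : 0 < min 1 (1 - a / A) :=
      lt_min one_pos (by rw [sub_pos, div_lt_one hA]; exact ha)
    filter_upwards [h _ hε (min_le_left _ _)] with n hn
    have hle : a ≤ A * (1 - min 1 (1 - a / A)) :=
      calc a = A * (a / A) := by field_simp
        _ ≤ A * (1 - min 1 (1 - a / A)) := by gcongr; linarith [min_le_right 1 (1 - a / A)]
    linarith [hn.1]
  · have ha0 : 0 < a := hA.trans ha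
    have hε : 0 < 1 - A / a := by rw [sub_pos, div_lt_one ha0]; exact ha
    filter_upwards [h _ hε (by linarith [div_pos hA ha0])] with n hn
    have hlt := hn.2
    rw [sub_sub_cancel, mul_div_assoc', div_lt_iff₀ ha0, mul_comm A a] at hlt
    exact lt_of_mul_lt_mul_right hlt hA.le

theorem otimesConvergesTo_iff {t : ℕ → ℝ × ℝ} {μξ νξ : ℝ} (hμξ : 0 < μξ) (hνξ : νξ < 1) :
    OtimesConvergesTo t μξ νξ ↔
      Tendsto (fun n => (t n).1) atTop (𝓝 μξ) ∧ Tendsto (fun n => (t n).2) atTop (𝓝 νξ) := by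
  rw [← tendsto_const_sub_iff 1 (f := fun n => (t n).2), tendsto_nhds_iff_eventually_ratio hμξ,
    tendsto_nhds_iff_eventually_ratio (sub_pos.2 hνξ), OtimesConvergesTo]
  simp only [← forall_and]
  refine forall₃_congr fun ε _ _ => ?_
  rw [← eventually_atTop_iff_exists_forall_gt, ← eventually_and]
  refine eventually_congr (Eventually.of_forall fun n => ?_)
  constructor
  · rintro ⟨⟨h₁, h₂⟩, h₃, h₄⟩
    exact ⟨⟨h₃, h₁⟩, by linarith, by linarith⟩
  · rintro ⟨⟨h₁, h₂⟩, h₃, h₄⟩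
    exact ⟨⟨h₂, by linarith⟩, h₁, by linarith⟩

noncomputable def weightedMean (p x : ℕ → ℝ) (n : ℕ) : ℝ :=
  (∑ k ∈ range (n + 1), p k * x k) / Psum p n

noncomputable def weightedGeomMean (p x : ℕ → ℝ) (n : ℕ) : ℝ :=
  ∏ k ∈ range (n + 1), x k ^ (p k / Psum p n)

theorem tendsto_weightedMean {p x : ℕ → ℝ} {L : ℝ} (hp : ∀ n, 0 ≤ p n)
    (hP : Tendsto (Psum p) atTop atTop) (hx : Tendsto x atTop (𝓝 L)) :
    Tendsto (weightedMean p x) atTop (𝓝 L) := by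
  have hdev : (fun k => p k * (x k - L)) =o[atTop] p := by
    simpa using (isBigO_refl p atTop).mul_isLittleO
      ((isLittleO_one_iff ℝ).2 (tendsto_sub_nhds_zero_iff.2 hx))
  have hsum : (fun n => ∑ k ∈ range (n + 1), p k * (x k - L)) =o[atTop] Psum p :=
    (hdev.sum_range hp ((tendsto_add_atTop_iff_nat 1).1 hP)).comp_tendsto
      (tendsto_add_atTop_nat 1)
  rw [← tendsto_sub_nhds_zero_iff]
  refine hsum.tendsto_div_nhds_zero.congr' ?_
  filter_upwards [hP.eventually_gt_atTop 0] with n hn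
  rw [weightedMean, div_sub' hn.ne', Psum, sum_mul, ← sum_sub_distrib]
  simp only [mul_sub]

lemma weightedGeomMean_eq_exp_weightedMean_log {p x : ℕ → ℝ} (hx : ∀ n, 0 < x n) (n : ℕ) :
    weightedGeomMean p x n = Real.exp (weightedMean p (fun k => Real.log (x k)) n) := by
  rw [weightedGeomMean, weightedMean, sum_div, Real.exp_sum]
  refine prod_congr rfl fun k _ => ?_
  rw [Real.rpow_def_of_pos (hx k)]
  ring_nf

theorem tendsto_weightedGeomMean {p x : ℕ → ℝ} {L : ℝ} (hp : ∀ n, 0 ≤ p n)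
    (hP : Tendsto (Psum p) atTop atTop) (hx : ∀ n, 0 < x n) (hL : 0 < L)
    (hxL : Tendsto x atTop (𝓝 L)) :
    Tendsto (weightedGeomMean p x) atTop (𝓝 L) := by
  have hlog := (tendsto_weightedMean hp hP ((Real.continuousAt_log hL.ne').tendsto.comp hxL)).rexp
  rw [Real.exp_log hL] at hlog
  exact hlog.congr fun n => (weightedGeomMean_eq_exp_weightedMean_log hx n).symm

theorem weighted_geometric_mean_ifn_regular_general (p : ℕ → ℝ) (μ ν : ℕ → ℝ) (μξ νξ : ℝ)
    (hp : ∀ n, 0 ≤ p n) (hP : Tendsto (Psum p) atTop atTop)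
    (hα : ∀ n, 0 < μ n ∧ ν n < 1)
    (hξ : 0 < μξ ∧ νξ < 1)
    (hconv : OtimesConvergesTo (fun n => (μ n, ν n)) μξ νξ) :
    OtimesConvergesTo
      (fun n => (∏ k ∈ Finset.range (n + 1), μ k ^ (p k / Psum p n),
        1 - ∏ k ∈ Finset.range (n + 1), (1 - ν k) ^ (p k / Psum p n))) μξ νξ := by
  obtain ⟨hμξ, hνξ⟩ := hξ
  obtain ⟨hμ, hν⟩ := (otimesConvergesTo_iff hμξ hνξ).1 hconv
  rw [otimesConvergesTo_iff hμξ hνξ]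
  refine ⟨tendsto_weightedGeomMean hp hP (fun n => (hα n).1) hμξ hμ, ?_⟩
  have h1ν := tendsto_weightedGeomMean hp hP (fun n => sub_pos.2 (hα n).2) (sub_pos.2 hνξ)
    (tendsto_const_nhds.sub hν)
  simpa [weightedGeomMean] using (tendsto_const_nhds (x := (1 : ℝ))).sub h1ν

theorem weighted_geometric_mean_ifn_regular (p : ℕ → ℝ) (μ ν : ℕ → ℝ) (μξ νξ : ℝ)
    (hp : ∀ n, 0 ≤ p n) (hp0 : 0 < p 0) (hP : Tendsto (Psum p) atTop atTop)
    (hμ : ∀ n, 0 ≤ μ n) (hν : ∀ n, 0 ≤ ν n) (hsum : ∀ n, μ n + ν n ≤ 1)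
    (hα : ∀ n, 0 < μ n ∧ ν n < 1)
    (hμξ : 0 ≤ μξ) (hνξ : 0 ≤ νξ) (hsumξ : μξ + νξ ≤ 1)
    (hξ : 0 < μξ ∧ νξ < 1)
    (hconv : OtimesConvergesTo (fun n => (μ n, ν n)) μξ νξ) :
    OtimesConvergesTo
      (fun n => (∏ k ∈ Finset.range (n + 1), μ k ^ (p k / Psum p n),
        1 - ∏ k ∈ Finset.range (n + 1), (1 - ν k) ^ (p k / Psum p n))) μξ νξ :=
  weighted_geometric_mean_ifn_regular_general p μ ν μξ νξ hp hP hα hξ hconv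
end
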